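/- A symmetric bibasic transformation (the b = c = 0 case of the generalized Entry 1.4.1): Let q, h, t be complex numbers with |q^h| < 1, |q^t| < 1 and |q^{ht}| < 1 (principal complex powers), and let a, b be complex numbers with |a q^t| < 1 and |b q^h| < 1 such that all denominators below are nonzero. Then [1 / (bq^h;q^h)_∞] · ∑_{j=0}^∞ [(bq^h;q^h)_{tj} / (q^t;q^t)_j] · (aq^t)^j = [1 / (aq^t;q^t)_∞] · ∑_{k=0}^∞ [(aq^t;q^t)_{hk} / (q^h;q^h)_k] · (bq^h)^k. -/

import Mathlib

/-!
Write `x = a q^t`, `y = b q^h`, `R = q^{ht}`. The prefactor cancels the numerator of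
`(y;q^h)_{tj}`, leaving `x^j / ((q^t;q^t)_j (y R^j;q^h)_∞)`, and Euler's identity
`∑_k z^k / (Q;Q)_k = 1 / (z;Q)_∞` expands the last factor. The left side thus becomes the
absolutely convergent double series `∑_{j,k} x^j y^k R^{jk} / ((q^t;q^t)_j (q^h;q^h)_k)`, which is
symmetric under `(x, q^t, j) ↔ (y, q^h, k)`; summing it in the other order gives the right side.
Euler's identity follows from `S(x) - S(Qx) = x S(x)` for `S(x) = ∑_k x^k / (Q;Q)_k`: iterating
gives `S(x) (x;Q)_n = S(x Q^n)`, and letting `n → ∞` gives `S(x) (x;Q)_∞ = S(0) = 1`.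
-/

open Complex

/-- Finite q-Pochhammer symbol `(A;Q)_k = ∏_{r=0}^{k-1} (1 - A Q^r)`. -/
noncomputable def qp (A Q : ℂ) (k : ℕ) : ℂ := ∏ r ∈ Finset.range k, (1 - A * Q ^ r)

/-- Infinite q-Pochhammer symbol `(A;Q)_∞ = ∏_{r=0}^{∞} (1 - A Q^r)`. -/
noncomputable def qpInf (A Q : ℂ) : ℂ := ∏' r : ℕ, (1 - A * Q ^ r)

/-- q-Pochhammer symbol with (possibly non-integer) index:
`(A;Q)_{c k} := (A;Q)_∞ / (A R^k;Q)_∞` where `R = Q^c`. -/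
noncomputable def qpc (A Q R : ℂ) (k : ℕ) : ℂ := qpInf A Q / qpInf (A * R ^ k) Q

/-- q-Pochhammer symbol with shifted (possibly non-integer) index:
`(A;Q)_{c k + 1} := (A;Q)_∞ / (A Q R^k;Q)_∞` where `R = Q^c`. -/
noncomputable def qpc1 (A Q R : ℂ) (k : ℕ) : ℂ := qpInf A Q / qpInf (A * Q * R ^ k) Q

open Filter Topology

lemma norm_mul_pow_lt_one {A Q : ℂ} (hA : ‖A‖ < 1) (hQ : ‖Q‖ ≤ 1) (r : ℕ) :
    ‖A * Q ^ r‖ < 1 := by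
  rw [norm_mul, norm_pow]
  exact mul_lt_one_of_nonneg_of_lt_one_left (norm_nonneg A) hA (pow_le_one₀ (norm_nonneg Q) hQ)

lemma one_sub_mul_pow_ne_zero {A Q : ℂ} (hA : ‖A‖ < 1) (hQ : ‖Q‖ ≤ 1) (r : ℕ) :
    1 - A * Q ^ r ≠ 0 := by
  intro h
  simpa [← sub_eq_zero.mp h] using norm_mul_pow_lt_one hA hQ r

lemma summable_norm_mul_pow (A : ℂ) {Q : ℂ} (hQ : ‖Q‖ < 1) :
    Summable fun r : ℕ => ‖A * Q ^ r‖ := by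
  simpa only [norm_mul, norm_pow] using
    (summable_geometric_of_lt_one (norm_nonneg Q) hQ).mul_left ‖A‖

lemma multipliable_one_sub_mul_pow (A : ℂ) {Q : ℂ} (hQ : ‖Q‖ < 1) :
    Multipliable fun r : ℕ => 1 - A * Q ^ r := by
  simpa only [sub_eq_add_neg] using multipliable_one_add_of_summable (f := fun r => -(A * Q ^ r))
    (by simpa only [norm_neg] using summable_norm_mul_pow A hQ)

lemma qpInf_ne_zero {A Q : ℂ} (hA : ‖A‖ < 1) (hQ : ‖Q‖ < 1) : qpInf A Q ≠ 0 := by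
  simpa only [qpInf, sub_eq_add_neg] using
    tprod_one_add_ne_zero_of_summable (f := fun r : ℕ => -(A * Q ^ r))
      (by simpa only [← sub_eq_add_neg] using one_sub_mul_pow_ne_zero hA hQ.le)
      (by simpa only [norm_neg] using summable_norm_mul_pow A hQ)

lemma qp_succ (A Q : ℂ) (k : ℕ) : qp A Q (k + 1) = qp A Q k * (1 - A * Q ^ k) :=
  Finset.prod_range_succ _ _

lemma tendsto_qp_qpInf (A : ℂ) {Q : ℂ} (hQ : ‖Q‖ < 1) :
    Tendsto (qp A Q) atTop (𝓝 (qpInf A Q)) :=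
  (multipliable_one_sub_mul_pow A hQ).hasProd.tendsto_prod_nat

lemma exists_norm_pow_div_qp_le {Q : ℂ} (hQ : ‖Q‖ < 1) :
    ∃ C, 0 ≤ C ∧ ∀ (y : ℂ) (k : ℕ), ‖y ^ k / qp Q Q k‖ ≤ C * ‖y‖ ^ k := by
  obtain ⟨C, hC⟩ := isBounded_iff_forall_norm_le.mp <| Metric.isBounded_range_of_tendsto _ <|
    (tendsto_qp_qpInf Q hQ).inv₀ (qpInf_ne_zero hQ hQ)
  have hC' (k : ℕ) : ‖(qp Q Q k)⁻¹‖ ≤ C := hC _ ⟨k, rfl⟩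
  refine ⟨C, (norm_nonneg _).trans (hC' 0), fun y k => ?_⟩
  rw [div_eq_mul_inv, norm_mul, norm_pow, mul_comm C]
  exact mul_le_mul_of_nonneg_left (hC' k) (by positivity)

lemma summable_norm_pow_div_qp {Q x : ℂ} (hQ : ‖Q‖ < 1) (hx : ‖x‖ < 1) :
    Summable fun k : ℕ => ‖x ^ k / qp Q Q k‖ := by
  obtain ⟨C, -, hC⟩ := exists_norm_pow_div_qp_le hQ
  exact .of_nonneg_of_le (fun _ => norm_nonneg _) (hC x)
    ((summable_geometric_of_lt_one (norm_nonneg x) hx).mul_left C)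

section Euler

variable {Q x : ℂ}

noncomputable def eulerSum (Q x : ℂ) : ℂ := ∑' k : ℕ, x ^ k / qp Q Q k

lemma eulerSum_zero (Q : ℂ) : eulerSum Q 0 = 1 := by
  rw [eulerSum, tsum_eq_single 0 fun k hk => by simp [zero_pow hk]]
  simp [qp]

lemma continuousOn_eulerSum (hQ : ‖Q‖ < 1) {r : ℝ} (hr₀ : 0 ≤ r) (hr : r < 1) :
    ContinuousOn (eulerSum Q) (Metric.closedBall 0 r) := by
  obtain ⟨C, hC₀, hC⟩ := exists_norm_pow_div_qp_le hQ
  refine continuousOn_tsum (fun k => ((continuous_pow k).div_const _).continuousOn)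
    ((summable_geometric_of_lt_one hr₀ hr).mul_left C) fun k y hy => (hC y k).trans ?_
  gcongr
  simpa using hy

lemma eulerSum_sub_eulerSum_mul (hQ : ‖Q‖ < 1) (hx : ‖x‖ < 1) :
    eulerSum Q x - eulerSum Q (Q * x) = x * eulerSum Q x := by
  have hQx : ‖Q * x‖ < 1 := by rw [mul_comm]; simpa using norm_mul_pow_lt_one hx hQ.le 1
  have hsum := (summable_norm_pow_div_qp hQ hx).of_norm
  have hcoeff (k : ℕ) : (x ^ (k + 1) / qp Q Q (k + 1) - (Q * x) ^ (k + 1) / qp Q Q (k + 1))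
      = x * (x ^ k / qp Q Q k) := by
    have := one_sub_mul_pow_ne_zero hQ hQ.le k
    rw [qp_succ]
    field_simp
    ring
  rw [eulerSum, eulerSum, ← hsum.tsum_sub (summable_norm_pow_div_qp hQ hQx).of_norm,
    (hsum.sub (summable_norm_pow_div_qp hQ hQx).of_norm).tsum_eq_zero_add, tsum_congr hcoeff,
    tsum_mul_left]
  simp

lemma eulerSum_mul_qp (hQ : ‖Q‖ < 1) (hx : ‖x‖ < 1) (n : ℕ) :
    eulerSum Q x * qp x Q n = eulerSum Q (x * Q ^ n) := by
  induction n with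
  | zero => simp [qp]
  | succ n ih =>
    have hxQn := eulerSum_sub_eulerSum_mul hQ (norm_mul_pow_lt_one hx hQ.le n)
    rw [qp_succ, ← mul_assoc, ih, show x * Q ^ (n + 1) = Q * (x * Q ^ n) by ring]
    linear_combination hxQn

lemma eulerSum_mul_qpInf (hQ : ‖Q‖ < 1) (hx : ‖x‖ < 1) : eulerSum Q x * qpInf x Q = 1 := by
  have hxQn : Tendsto (fun n => x * Q ^ n) atTop (𝓝[Metric.closedBall 0 ‖x‖] 0) := by
    refine tendsto_nhdsWithin_iff.mpr ⟨?_, .of_forall fun n => ?_⟩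
    · simpa using (tendsto_pow_atTop_nhds_zero_of_norm_lt_one hQ).const_mul x
    · rw [mem_closedBall_zero_iff, norm_mul, norm_pow]
      exact mul_le_of_le_one_right (norm_nonneg x) (pow_le_one₀ (norm_nonneg Q) hQ.le)
  have hS := (continuousOn_eulerSum hQ (norm_nonneg x) hx 0 (by simp)).tendsto.comp hxQn
  rw [eulerSum_zero] at hS
  exact tendsto_nhds_unique ((tendsto_qp_qpInf x hQ).const_mul (eulerSum Q x))
    (hS.congr fun n => (eulerSum_mul_qp hQ hx n).symm)

theorem tsum_pow_div_qp (hQ : ‖Q‖ < 1) (hx : ‖x‖ < 1) :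
    ∑' k : ℕ, x ^ k / qp Q Q k = (qpInf x Q)⁻¹ :=
  eq_inv_of_mul_eq_one_left (eulerSum_mul_qpInf hQ hx)

end Euler

lemma inv_qpInf_mul_tsum_qpc {Qt Qh R x y : ℂ} (hQh : ‖Qh‖ < 1) (hR : ‖R‖ ≤ 1) (hy : ‖y‖ < 1) :
    (1 / qpInf y Qh) * ∑' j : ℕ, (qpc y Qh R j / qp Qt Qt j) * x ^ j
      = ∑' j : ℕ, ∑' k : ℕ, (x ^ j / qp Qt Qt j) * (y ^ k / qp Qh Qh k) * R ^ (j * k) := by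
  rw [← tsum_mul_left]
  refine tsum_congr fun j => ?_
  have hyR := norm_mul_pow_lt_one hy hR j
  have := qpInf_ne_zero hy hQh
  calc (1 / qpInf y Qh) * (qpc y Qh R j / qp Qt Qt j * x ^ j)
      = (x ^ j / qp Qt Qt j) * (qpInf (y * R ^ j) Qh)⁻¹ := by
        rw [qpc]
        field_simp
    _ = ∑' k : ℕ, (x ^ j / qp Qt Qt j) * ((y * R ^ j) ^ k / qp Qh Qh k) := by
        rw [← tsum_pow_div_qp hQh hyR, tsum_mul_left]
    _ = ∑' k : ℕ, (x ^ j / qp Qt Qt j) * (y ^ k / qp Qh Qh k) * R ^ (j * k) :=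
        tsum_congr fun k => by ring

lemma summable_bibasic_double {Qt Qh R x y : ℂ} (hQt : ‖Qt‖ < 1) (hQh : ‖Qh‖ < 1)
    (hR : ‖R‖ ≤ 1) (hx : ‖x‖ < 1) (hy : ‖y‖ < 1) :
    Summable fun p : ℕ × ℕ =>
      (x ^ p.1 / qp Qt Qt p.1) * (y ^ p.2 / qp Qh Qh p.2) * R ^ (p.1 * p.2) := by
  refine .of_norm_bounded ((summable_norm_pow_div_qp hQt hx).mul_norm
    (summable_norm_pow_div_qp hQh hy)) fun p => ?_
  rw [norm_mul _ (R ^ _)]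
  exact mul_le_of_le_one_right (norm_nonneg _) (by simpa using pow_le_one₀ (norm_nonneg R) hR)

theorem bibasic_symmetric {Qt Qh R x y : ℂ} (hQt : ‖Qt‖ < 1) (hQh : ‖Qh‖ < 1)
    (hR : ‖R‖ ≤ 1) (hx : ‖x‖ < 1) (hy : ‖y‖ < 1) :
    (1 / qpInf y Qh) * ∑' j : ℕ, (qpc y Qh R j / qp Qt Qt j) * x ^ j
      = (1 / qpInf x Qt) * ∑' k : ℕ, (qpc x Qt R k / qp Qh Qh k) * y ^ k := by
  rw [inv_qpInf_mul_tsum_qpc hQh hR hy, inv_qpInf_mul_tsum_qpc hQt hR hx,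
    ← (summable_bibasic_double hQt hQh hR hx hy).tsum_comm
      (f := fun j k => (x ^ j / qp Qt Qt j) * (y ^ k / qp Qh Qh k) * R ^ (j * k))]
  exact tsum_congr fun k => tsum_congr fun j => by ring

theorem symmetric_bibasic_general (q h t a b : ℂ)
    (hqh : ‖q ^ h‖ < 1) (hqt : ‖q ^ t‖ < 1)
    (hqht : ‖q ^ (h * t)‖ < 1)
    (haq : ‖a * q ^ t‖ < 1) (hbq : ‖b * q ^ h‖ < 1) :
    (1 / qpInf (b * q ^ h) (q ^ h)) *
      ∑' j : ℕ, (qpc (b * q ^ h) (q ^ h) (q ^ (h * t)) j / qp (q ^ t) (q ^ t) j) *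
        (a * q ^ t) ^ j
    = (1 / qpInf (a * q ^ t) (q ^ t)) *
      ∑' k : ℕ, (qpc (a * q ^ t) (q ^ t) (q ^ (h * t)) k / qp (q ^ h) (q ^ h) k) *
        (b * q ^ h) ^ k :=
  bibasic_symmetric hqt hqh hqht.le haq hbq

/-- a symmetric bibasic transformation (`b = c = 0` case of the
generalized Entry 1.4.1). -/
theorem symmetric_bibasic (q h t a b : ℂ)
    (hqh : ‖q ^ h‖ < 1) (hqt : ‖q ^ t‖ < 1)
    (hqht : ‖q ^ (h * t)‖ < 1)
    (haq : ‖a * q ^ t‖ < 1) (hbq : ‖b * q ^ h‖ < 1)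
    (h1 : qpInf (b * q ^ h) (q ^ h) ≠ 0)
    (h2 : qpInf (a * q ^ t) (q ^ t) ≠ 0)
    (h3 : ∀ j : ℕ, qp (q ^ t) (q ^ t) j ≠ 0)
    (h4 : ∀ j : ℕ, qpInf (b * q ^ h * (q ^ (h * t)) ^ j) (q ^ h) ≠ 0)
    (h5 : ∀ k : ℕ, qp (q ^ h) (q ^ h) k ≠ 0)
    (h6 : ∀ k : ℕ, qpInf (a * q ^ t * (q ^ (h * t)) ^ k) (q ^ t) ≠ 0) :
    (1 / qpInf (b * q ^ h) (q ^ h)) *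
      ∑' j : ℕ, (qpc (b * q ^ h) (q ^ h) (q ^ (h * t)) j / qp (q ^ t) (q ^ t) j) *
        (a * q ^ t) ^ j
    = (1 / qpInf (a * q ^ t) (q ^ t)) *
      ∑' k : ℕ, (qpc (a * q ^ t) (q ^ t) (q ^ (h * t)) k / qp (q ^ h) (q ^ h) k) *
        (b * q ^ h) ^ k :=
  symmetric_bibasic_general q h t a b hqh hqt hqht haq hbq
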